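/- For T in B_A(H), define Ω_A(T) = sup{ ‖αT + βT^{♯_A}‖_A : α, β ∈ ℂ, |α|² + |β|² ≤ 1 }. Then Ω_A(T) = sup{ √(|⟨Tx,y⟩_A|² + |⟨T^{♯_A}x,y⟩_A|²) : x, y ∈ H, ‖x‖_A = ‖y‖_A = 1 }, and ‖T‖_A ≤ Ω_A(T) ≤ min{ √(‖TT^{♯_A} + T^{♯_A}T‖_A), √(‖T‖_A² + ω_A(T²)) } ≤ √2 ‖T‖_A; moreover, if T is A-selfadjoint, then Ω_A(T) = √2 ‖T‖_A. -/

import Mathlib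

noncomputable section

open ContinuousLinearMap

variable {H : Type*} [NormedAddCommGroup H] [InnerProductSpace ℂ H] [CompleteSpace H]

/-- `Ts` is the distinguished `A`-adjoint `T^{♯_A}` of `T`:
the unique solution of `A X = T* A` whose range lies in the closure of the range of `A`. -/
def IsSharp (A T Ts : H →L[ℂ] H) : Prop :=
  A ∘L Ts = adjoint T ∘L A ∧ ∀ x, Ts x ∈ closure (Set.range A)

/-- Membership in `B_A(H)`: admitting an `A`-adjoint. -/
def MemBA (A T : H →L[ℂ] H) : Prop := ∃ Ts, IsSharp A T Ts

/-- The seminorm `‖x‖_A = √⟨Ax,x⟩`. -/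
def aNorm (A : H →L[ℂ] H) (x : H) : ℝ := Real.sqrt ((inner ℂ (A x) x : ℂ).re)

/-- Membership in `B_{A^{1/2}}(H)`: `A`-bounded operators. -/
def MemBAhalf (A T : H →L[ℂ] H) : Prop :=
  ∃ c : ℝ, 0 < c ∧ ∀ x, aNorm A (T x) ≤ c * aNorm A x

/-- `Re_A(T) = (T + T^{♯_A})/2`, where `Ts` stands for `T^{♯_A}`. -/
def ReA (T Ts : H →L[ℂ] H) : H →L[ℂ] H := (2 : ℂ)⁻¹ • (T + Ts)

/-- `Im_A(T) = (T - T^{♯_A})/(2i)`, where `Ts` stands for `T^{♯_A}`. -/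
def ImA (T Ts : H →L[ℂ] H) : H →L[ℂ] H := (2 * Complex.I)⁻¹ • (T - Ts)

/-- The generalized `A`-numerical radius
`ω_{N_A}(T) = sup_θ N_A(Re_A(e^{iθ}T))`, where `Ts` stands for `T^{♯_A}`. -/
def wNA (N : Seminorm ℂ (H →L[ℂ] H)) (T Ts : H →L[ℂ] H) : ℝ :=
  ⨆ θ : ℝ, N (ReA (Complex.exp ((θ : ℂ) * Complex.I) • T)
      (Complex.exp (-((θ : ℂ) * Complex.I)) • Ts))

/-- `N_A` is `A`-selfadjoint invariant. -/
def SelfadjInv (A : H →L[ℂ] H) (N : Seminorm ℂ (H →L[ℂ] H)) : Prop :=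
  ∀ T Ts, IsSharp A T Ts → N T = N Ts

/-- `N_A` is submultiplicative. -/
def Submult (A : H →L[ℂ] H) (N : Seminorm ℂ (H →L[ℂ] H)) : Prop :=
  ∀ T S, MemBAhalf A T → MemBAhalf A S → N (T ∘L S) ≤ N T * N S

/-- `N_A` is `A`-increasing. -/
def AIncreasing (A : H →L[ℂ] H) (N : Seminorm ℂ (H →L[ℂ] H)) : Prop :=
  ∀ S T : H →L[ℂ] H, IsSelfAdjoint (A ∘L S) → IsSelfAdjoint (A ∘L T) →
    (A ∘L (T - S)).IsPositive → N S ≤ N T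

/-- `N_A` satisfies the `A`-power property. -/
def APower (A : H →L[ℂ] H) (N : Seminorm ℂ (H →L[ℂ] H)) : Prop :=
  ∀ T : H →L[ℂ] H, IsSelfAdjoint (A ∘L T) → ∀ n : ℕ, 0 < n → N (T ^ n) = N T ^ n

/-- `U` is `A`-unitary with `A`-adjoint `Us`. -/
def AUnitary (A U Us : H →L[ℂ] H) : Prop :=
  IsSharp A U Us ∧ ∀ x, aNorm A (U x) = aNorm A x ∧ aNorm A (Us x) = aNorm A x

/-- `N_A` is `A`-weakly unitarily invariant. -/
def WeakUnitInv (A : H →L[ℂ] H) (N : Seminorm ℂ (H →L[ℂ] H)) : Prop :=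
  ∀ T U Us, MemBAhalf A T → AUnitary A U Us → N (Us ∘L T ∘L U) = N T

/-- semi-inner ℂ product `⟨x,y⟩_A = ⟨Ax, y⟩`. -/
def aInner (A : H →L[ℂ] H) (x y : H) : ℂ := inner ℂ (A x) y

/-- `A`-operator seminorm `‖T‖_A = sup{|⟨Tx,y⟩_A| : ‖x‖_A = ‖y‖_A = 1}`. -/
def opANorm (A T : H →L[ℂ] H) : ℝ :=
  sSup {r : ℝ | ∃ x y, aNorm A x = 1 ∧ aNorm A y = 1 ∧ r = ‖aInner A (T x) y‖}

/-- `A`-numerical radius `ω_A(T) = sup{|⟨Tx,x⟩_A| : ‖x‖_A = 1}`. -/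
def wA (A T : H →L[ℂ] H) : ℝ :=
  sSup {r : ℝ | ∃ x, aNorm A x = 1 ∧ r = ‖aInner A (T x) x‖}

/-- `Ω_A(T) = sup{‖αT + βT^{♯_A}‖_A : |α|² + |β|² ≤ 1}`, with `Ts` standing for `T^{♯_A}`. -/
def OmegaA (A T Ts : H →L[ℂ] H) : ℝ :=
  sSup {r : ℝ | ∃ α β : ℂ, ‖α‖ ^ 2 + ‖β‖ ^ 2 ≤ 1 ∧ r = opANorm A (α • T + β • Ts)}

set_option synthInstance.maxHeartbeats 1000000
set_option maxHeartbeats 1000000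
set_option linter.unusedSectionVars false
set_option linter.unusedVariables false





section Base
variable {A S : H →L[ℂ] H}

lemma sa_inner_left (hSsa : IsSelfAdjoint S) (x y : H) :
    (inner ℂ (S x) y : ℂ) = inner ℂ x (S y) := by
  rw [← adjoint_inner_left, (isSelfAdjoint_iff' (A := S)).mp hSsa]

lemma aInner_eq (hS2 : S * S = A) (hSsa : IsSelfAdjoint S) (x y : H) :
    aInner A x y = inner ℂ (S x) (S y) := by
  have : A x = S (S x) := by rw [← hS2]; rfl
  rw [aInner, this, sa_inner_left hSsa]

lemma aNorm_eq (hS2 : S * S = A) (hSsa : IsSelfAdjoint S) (x : H) :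
    aNorm A x = ‖S x‖ := by
  have h : (inner ℂ (A x) x : ℂ) = inner ℂ (S x) (S x) := aInner_eq hS2 hSsa x x
  rw [aNorm, h]
  have : (inner ℂ (S x) (S x) : ℂ).re = ‖S x‖ ^ 2 := by
    have h2 := @inner_self_eq_norm_sq ℂ H _ _ _ (S x)
    simpa using h2
  rw [this, Real.sqrt_sq (norm_nonneg _)]

lemma aNorm_nonneg' (A : H →L[ℂ] H) (x : H) : 0 ≤ aNorm A x := Real.sqrt_nonneg _

end Base

section Base2
variable {A S : H →L[ℂ] H}

lemma pow_apply_norm_le (R : H →L[ℂ] H) (k : ℕ) (x : H) :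
    ‖(R ^ k) x‖ ≤ ‖R‖ ^ k * ‖x‖ := by
  induction k with
  | zero => simp
  | succ n ih =>
    have h1 : (R ^ (n + 1)) x = R ((R ^ n) x) := by
      rw [pow_succ']; rfl
    rw [h1, pow_succ']
    calc ‖R ((R ^ n) x)‖ ≤ ‖R‖ * ‖(R ^ n) x‖ := R.le_opNorm _
      _ ≤ ‖R‖ * (‖R‖ ^ n * ‖x‖) := by
          exact mul_le_mul_of_nonneg_left ih (norm_nonneg R)
      _ = ‖R‖ * ‖R‖ ^ n * ‖x‖ := by ring

lemma pow_sharp (hAsa : IsSelfAdjoint A) {R : H →L[ℂ] H} (hR : A * R = star R * A) (k : ℕ) :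
    A * R ^ k = star (R ^ k) * A := by
  induction k with
  | zero => simp
  | succ n ih =>
    have : A * R ^ (n + 1) = (A * R ^ n) * R := by rw [pow_succ, mul_assoc]
    rw [this, ih, mul_assoc, hR, ← mul_assoc, ← star_mul, ← pow_succ']

lemma key_sq (hS2 : S * S = A) (hSsa : IsSelfAdjoint S) (hAsa : IsSelfAdjoint A)
    {R : H →L[ℂ] H} (hR : A * R = star R * A) (k : ℕ) (x : H) :
    ‖S ((R ^ k) x)‖ ^ 2 ≤ ‖S x‖ * ‖S ((R ^ (2 * k)) x)‖ := by
  have h0 : (inner ℂ (S ((R ^ k) x)) (S ((R ^ k) x)) : ℂ) = inner ℂ (S x) (S ((R ^ (2 * k)) x)) := by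
    rw [← aInner_eq hS2 hSsa, ← aInner_eq hS2 hSsa]
    unfold aInner
    have h1 : A ((R ^ k) x) = ((star (R ^ k)) * A) x := by
      rw [← pow_sharp hAsa hR]; rfl
    rw [h1]
    have h2 : ((star (R ^ k) * A) x : H) = (star (R ^ k)) (A x) := rfl
    rw [h2, star_eq_adjoint, adjoint_inner_left]
    congr 1
    have : (R ^ k) ((R ^ k) x) = ((R ^ k) * (R ^ k)) x := rfl
    rw [this, ← pow_add, two_mul]
  have h3 : ‖S ((R ^ k) x)‖ ^ 2 = (inner ℂ (S ((R ^ k) x)) (S ((R ^ k) x)) : ℂ).re := by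
    have h2 := @inner_self_eq_norm_sq ℂ H _ _ _ (S ((R ^ k) x))
    simpa using h2.symm
  rw [h3, h0]
  calc (inner ℂ (S x) (S ((R ^ (2 * k)) x)) : ℂ).re ≤ ‖(inner ℂ (S x) (S ((R ^ (2 * k)) x)) : ℂ)‖ :=
        Complex.re_le_norm _
    _ ≤ ‖S x‖ * ‖S ((R ^ (2 * k)) x)‖ := norm_inner_le_norm _ _

/-- The key boundedness lemma: an operator intertwined with `A` is `A`-bounded
with constant its operator norm. -/
lemma aNorm_le_opNorm_mul (hS2 : S * S = A) (hSsa : IsSelfAdjoint S) (hAsa : IsSelfAdjoint A)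
    {R : H →L[ℂ] H} (hR : A * R = star R * A) (x : H) :
    ‖S (R x)‖ ≤ ‖R‖ * ‖S x‖ := by
  set c := ‖S x‖ with hc
  set L := ‖S (R x)‖ with hL
  have hLnn : 0 ≤ L := norm_nonneg _
  have hcnn : 0 ≤ c := norm_nonneg _
  -- case c = 0
  rcases eq_or_lt_of_le hcnn with hc0 | hcpos
  · have h := key_sq hS2 hSsa hAsa hR 1 x
    rw [pow_one] at h
    have hL2 : L ^ 2 ≤ 0 := by
      rw [hL]
      calc ‖S (R x)‖ ^ 2 ≤ ‖S x‖ * ‖S ((R ^ (2 * 1)) x)‖ := h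
        _ = 0 := by rw [← hc, ← hc0, zero_mul]
    have hL0 : L = 0 := by nlinarith
    rw [hL0]; positivity
  -- case R = 0
  rcases eq_or_lt_of_le (norm_nonneg R) with hR0 | hRpos
  · have hRz : R = 0 := norm_eq_zero.mp hR0.symm
    rw [hL, hRz]
    simp only [zero_apply, map_zero, norm_zero]
    positivity
  -- main case
  have hmain : ∀ n : ℕ, L ^ (2 ^ n) ≤ c ^ (2 ^ n - 1) * ‖S (((R ^ (2 ^ n)) x))‖ := by
    intro n
    induction n with
    | zero => simp [hL]
    | succ n ih =>
      have hgnn : (0:ℝ) ≤ ‖S ((R ^ (2 ^ n)) x)‖ := norm_nonneg _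
      have hkey := key_sq hS2 hSsa hAsa hR (2 ^ n) x
      have hexp : 2 * 2 ^ n = 2 ^ (n + 1) := by ring
      rw [hexp] at hkey
      have h1 : L ^ (2 ^ (n + 1)) = (L ^ (2 ^ n)) ^ 2 := by
        rw [pow_succ, pow_mul]
      have h2 : (L ^ (2 ^ n)) ^ 2 ≤ (c ^ (2 ^ n - 1) * ‖S ((R ^ (2 ^ n)) x)‖) ^ 2 := by
        apply pow_le_pow_left₀ (by positivity) ih
      have h3 : (c ^ (2 ^ n - 1) * ‖S ((R ^ (2 ^ n)) x)‖) ^ 2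
          = c ^ (2 ^ n - 1) * c ^ (2 ^ n - 1) * ‖S ((R ^ (2 ^ n)) x)‖ ^ 2 := by ring
      have h4 : c ^ (2 ^ n - 1) * c ^ (2 ^ n - 1) * ‖S ((R ^ (2 ^ n)) x)‖ ^ 2
          ≤ c ^ (2 ^ n - 1) * c ^ (2 ^ n - 1) * (c * ‖S ((R ^ (2 ^ (n+1))) x)‖) := by
        apply mul_le_mul_of_nonneg_left hkey (by positivity)
      have hexp2 : c ^ (2 ^ n - 1) * c ^ (2 ^ n - 1) * c = c ^ (2 ^ (n + 1) - 1) := by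
        rw [← pow_add, ← pow_succ]
        congr 1
        have h1 : 1 ≤ 2 ^ n := Nat.one_le_two_pow
        have h2 : 2 ^ (n + 1) = 2 * 2 ^ n := by ring
        omega
      calc L ^ (2 ^ (n + 1)) = (L ^ (2 ^ n)) ^ 2 := h1
        _ ≤ (c ^ (2 ^ n - 1) * ‖S ((R ^ (2 ^ n)) x)‖) ^ 2 := h2
        _ = c ^ (2 ^ n - 1) * c ^ (2 ^ n - 1) * ‖S ((R ^ (2 ^ n)) x)‖ ^ 2 := h3
        _ ≤ c ^ (2 ^ n - 1) * c ^ (2 ^ n - 1) * (c * ‖S ((R ^ (2 ^ (n+1))) x)‖) := h4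
        _ = c ^ (2 ^ (n + 1) - 1) * ‖S ((R ^ (2 ^ (n+1))) x)‖ := by
            rw [← hexp2]; ring
  -- conclude
  by_contra hcon
  push_neg at hcon
  set d := ‖R‖ * c with hd
  have hdpos : 0 < d := mul_pos hRpos hcpos
  set t := L / d with ht
  have htgt : 1 < t := (one_lt_div hdpos).mpr hcon
  set K := ‖S‖ * ‖x‖ / c with hK
  have hbound : ∀ n : ℕ, t ^ n ≤ K := by
    intro n
    have h1 := hmain n
    have h2 : ‖S ((R ^ (2 ^ n)) x)‖ ≤ ‖S‖ * (‖R‖ ^ (2 ^ n) * ‖x‖) := by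
      calc ‖S ((R ^ (2 ^ n)) x)‖ ≤ ‖S‖ * ‖(R ^ (2 ^ n)) x‖ := S.le_opNorm _
        _ ≤ ‖S‖ * (‖R‖ ^ (2 ^ n) * ‖x‖) :=
            mul_le_mul_of_nonneg_left (pow_apply_norm_le R _ x) (norm_nonneg S)
    have h3 : L ^ (2 ^ n) ≤ c ^ (2 ^ n - 1) * (‖S‖ * (‖R‖ ^ (2 ^ n) * ‖x‖)) :=
      h1.trans (mul_le_mul_of_nonneg_left h2 (by positivity))
    have hce : c ^ (2 ^ n) = c ^ (2 ^ n - 1) * c := by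
      rw [← pow_succ]
      congr 1
      have : 1 ≤ 2 ^ n := Nat.one_le_two_pow
      omega
    have h4 : t ^ (2 ^ n) ≤ K := by
      rw [ht, div_pow, div_le_iff₀ (by positivity), hK]
      have hde : d ^ (2 ^ n) = ‖R‖ ^ (2 ^ n) * c ^ (2 ^ n) := by
        rw [hd, mul_pow]
      rw [hde, hce]
      calc L ^ (2 ^ n) ≤ c ^ (2 ^ n - 1) * (‖S‖ * (‖R‖ ^ (2 ^ n) * ‖x‖)) := h3
        _ = ‖S‖ * ‖x‖ / c * (‖R‖ ^ (2 ^ n) * (c ^ (2 ^ n - 1) * c)) := by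
            field_simp
    calc t ^ n ≤ t ^ (2 ^ n) := pow_le_pow_right₀ htgt.le (Nat.lt_two_pow_self).le
      _ ≤ K := h4
  obtain ⟨n, hn⟩ := pow_unbounded_of_one_lt K htgt
  exact absurd (hbound n) (not_le.mpr hn)

end Base2

section Base3
variable {A S T Ts : H →L[ℂ] H}

lemma sharp_mul (hT : A ∘L Ts = adjoint T ∘L A) : A * Ts = star T * A := by
  rw [star_eq_adjoint]; exact hT

lemma sharp_mul' (hAsa : IsSelfAdjoint A) (hT : A ∘L Ts = adjoint T ∘L A) :
    A * T = star Ts * A := by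
  have h := congrArg star (sharp_mul hT)
  rw [star_mul, star_mul, star_star, hAsa.star_eq] at h
  exact h.symm

lemma swap1 (hS2 : S * S = A) (hSsa : IsSelfAdjoint S) (hAsa : IsSelfAdjoint A)
    (hT : A ∘L Ts = adjoint T ∘L A) (x y : H) :
    aInner A (T x) y = aInner A x (Ts y) := by
  unfold aInner
  have h1 : A (T x) = (star Ts) (A x) := by
    have : A (T x) = (A * T) x := rfl
    rw [this, sharp_mul' hAsa hT]; rfl
  rw [h1, star_eq_adjoint, adjoint_inner_left]

lemma swap2 (hS2 : S * S = A) (hSsa : IsSelfAdjoint S) (hAsa : IsSelfAdjoint A)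
    (hT : A ∘L Ts = adjoint T ∘L A) (x y : H) :
    aInner A (Ts x) y = aInner A x (T y) := by
  unfold aInner
  have h1 : A (Ts x) = (star T) (A x) := by
    have : A (Ts x) = (A * Ts) x := rfl
    rw [this, sharp_mul hT]; rfl
  rw [h1, star_eq_adjoint, adjoint_inner_left]

lemma aInner_conj (hS2 : S * S = A) (hSsa : IsSelfAdjoint S) (x y : H) :
    aInner A x y = starRingEnd ℂ (aInner A y x) := by
  rw [aInner_eq hS2 hSsa, aInner_eq hS2 hSsa, inner_conj_symm]

lemma sq_le_imp {a c K : ℝ} (ha : 0 ≤ a) (hc : 0 ≤ c) (hK : 0 ≤ K)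
    (h : a ^ 2 ≤ K * c ^ 2) : a ≤ Real.sqrt K * c := by
  nlinarith [Real.sq_sqrt hK, Real.sqrt_nonneg K, sq_nonneg (a - Real.sqrt K * c),
    sq_nonneg (a + Real.sqrt K * c), mul_nonneg (Real.sqrt_nonneg K) hc]

lemma T_abound (hS2 : S * S = A) (hSsa : IsSelfAdjoint S) (hAsa : IsSelfAdjoint A)
    (hT : A ∘L Ts = adjoint T ∘L A) (x : H) :
    ‖S (T x)‖ ≤ Real.sqrt ‖Ts * T‖ * ‖S x‖ := by
  have hR : A * (Ts * T) = star (Ts * T) * A := by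
    rw [star_mul, ← mul_assoc, sharp_mul hT, mul_assoc, mul_assoc, ← sharp_mul' hAsa hT,
      ← mul_assoc]
  have h1 : ‖S (T x)‖ ^ 2 ≤ ‖S x‖ * ‖S ((Ts * T) x)‖ := by
    have h0 : (inner ℂ (S (T x)) (S (T x)) : ℂ) = inner ℂ (S x) (S ((Ts * T) x)) := by
      rw [← aInner_eq hS2 hSsa, ← aInner_eq hS2 hSsa]
      rw [swap1 hS2 hSsa hAsa hT]
      rfl
    have h3 : ‖S (T x)‖ ^ 2 = (inner ℂ (S (T x)) (S (T x)) : ℂ).re := by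
      have h2 := @inner_self_eq_norm_sq ℂ H _ _ _ (S (T x))
      simpa using h2.symm
    rw [h3, h0]
    calc (inner ℂ (S x) (S ((Ts * T) x)) : ℂ).re ≤ ‖(inner ℂ (S x) (S ((Ts * T) x)) : ℂ)‖ :=
          Complex.re_le_norm _
      _ ≤ ‖S x‖ * ‖S ((Ts * T) x)‖ := norm_inner_le_norm _ _
  have h2 : ‖S ((Ts * T) x)‖ ≤ ‖Ts * T‖ * ‖S x‖ := aNorm_le_opNorm_mul hS2 hSsa hAsa hR x
  have h4 : ‖S (T x)‖ ^ 2 ≤ ‖Ts * T‖ * ‖S x‖ ^ 2 := by nlinarith [norm_nonneg (S x)]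
  exact sq_le_imp (norm_nonneg _) (norm_nonneg _) (norm_nonneg _) h4

lemma Ts_abound (hS2 : S * S = A) (hSsa : IsSelfAdjoint S) (hAsa : IsSelfAdjoint A)
    (hT : A ∘L Ts = adjoint T ∘L A) (x : H) :
    ‖S (Ts x)‖ ≤ Real.sqrt ‖T * Ts‖ * ‖S x‖ := by
  have hR : A * (T * Ts) = star (T * Ts) * A := by
    rw [star_mul, ← mul_assoc, sharp_mul' hAsa hT, mul_assoc, mul_assoc, ← sharp_mul hT,
      ← mul_assoc]
  have h1 : ‖S (Ts x)‖ ^ 2 ≤ ‖S x‖ * ‖S ((T * Ts) x)‖ := by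
    have h0 : (inner ℂ (S (Ts x)) (S (Ts x)) : ℂ) = inner ℂ (S x) (S ((T * Ts) x)) := by
      rw [← aInner_eq hS2 hSsa, ← aInner_eq hS2 hSsa]
      rw [swap2 hS2 hSsa hAsa hT]
      rfl
    have h3 : ‖S (Ts x)‖ ^ 2 = (inner ℂ (S (Ts x)) (S (Ts x)) : ℂ).re := by
      have h2 := @inner_self_eq_norm_sq ℂ H _ _ _ (S (Ts x))
      simpa using h2.symm
    rw [h3, h0]
    calc (inner ℂ (S x) (S ((T * Ts) x)) : ℂ).re ≤ ‖(inner ℂ (S x) (S ((T * Ts) x)) : ℂ)‖ :=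
          Complex.re_le_norm _
      _ ≤ ‖S x‖ * ‖S ((T * Ts) x)‖ := norm_inner_le_norm _ _
  have h2 : ‖S ((T * Ts) x)‖ ≤ ‖T * Ts‖ * ‖S x‖ := aNorm_le_opNorm_mul hS2 hSsa hAsa hR x
  have h4 : ‖S (Ts x)‖ ^ 2 ≤ ‖T * Ts‖ * ‖S x‖ ^ 2 := by nlinarith [norm_nonneg (S x)]
  exact sq_le_imp (norm_nonneg _) (norm_nonneg _) (norm_nonneg _) h4

lemma exists_unit (hS2 : S * S = A) (hSsa : IsSelfAdjoint S) (hA : A ≠ 0) :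
    ∃ x₀ : H, ‖S x₀‖ = 1 := by
  have hS : S ≠ 0 := by
    intro h
    apply hA
    rw [← hS2, h, mul_zero]
  obtain ⟨y, hy⟩ : ∃ y, S y ≠ 0 := by
    by_contra h
    push_neg at h
    exact hS (ContinuousLinearMap.ext fun z => by rw [h z]; rfl)
  refine ⟨((‖S y‖⁻¹ : ℝ) : ℂ) • y, ?_⟩
  rw [map_smul, norm_smul]
  have : ‖((‖S y‖⁻¹ : ℝ) : ℂ)‖ = ‖S y‖⁻¹ := by
    rw [Complex.norm_real, Real.norm_eq_abs, abs_of_nonneg (by positivity)]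
  rw [this, inv_mul_cancel₀ (norm_ne_zero_iff.mpr hy)]

end Base3

section Machinery
variable {A S : H →L[ℂ] H}

lemma abs_aInner_le_mul (hS2 : S * S = A) (hSsa : IsSelfAdjoint S) (u v : H) :
    ‖aInner A u v‖ ≤ ‖S u‖ * ‖S v‖ := by
  rw [aInner_eq hS2 hSsa]
  exact norm_inner_le_norm _ _

lemma opSet_bddAbove (hS2 : S * S = A) (hSsa : IsSelfAdjoint S) {B : H →L[ℂ] H} {c : ℝ}
    (hB : ∀ x, ‖S (B x)‖ ≤ c * ‖S x‖) :
    BddAbove {r : ℝ | ∃ x y, aNorm A x = 1 ∧ aNorm A y = 1 ∧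
      r = ‖aInner A (B x) y‖} := by
  refine ⟨c, fun r hr => ?_⟩
  obtain ⟨x, y, hx, hy, rfl⟩ := hr
  rw [aNorm_eq hS2 hSsa] at hx hy
  calc ‖aInner A (B x) y‖ ≤ ‖S (B x)‖ * ‖S y‖ := abs_aInner_le_mul hS2 hSsa _ _
    _ ≤ (c * ‖S x‖) * ‖S y‖ := by
        apply mul_le_mul_of_nonneg_right (hB x) (norm_nonneg _)
    _ = c := by rw [hx, hy]; ring

lemma le_opANorm (hS2 : S * S = A) (hSsa : IsSelfAdjoint S) {B : H →L[ℂ] H} {c : ℝ}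
    (hB : ∀ x, ‖S (B x)‖ ≤ c * ‖S x‖) {x y : H} (hx : aNorm A x = 1) (hy : aNorm A y = 1) :
    ‖aInner A (B x) y‖ ≤ opANorm A B :=
  le_csSup (opSet_bddAbove hS2 hSsa hB) ⟨x, y, hx, hy, rfl⟩

lemma opANorm_le {B : H →L[ℂ] H} {m : ℝ} {x₀ : H} (hx₀ : aNorm A x₀ = 1)
    (h : ∀ x y, aNorm A x = 1 → aNorm A y = 1 → ‖aInner A (B x) y‖ ≤ m) :
    opANorm A B ≤ m := by
  have hne : {r : ℝ | ∃ x y, aNorm A x = 1 ∧ aNorm A y = 1 ∧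
      r = ‖aInner A (B x) y‖}.Nonempty := ⟨_, x₀, x₀, hx₀, hx₀, rfl⟩
  refine csSup_le hne ?_
  rintro r ⟨x, y, hx, hy, rfl⟩
  exact h x y hx hy

lemma opANorm_nonneg (hS2 : S * S = A) (hSsa : IsSelfAdjoint S) {B : H →L[ℂ] H} {c : ℝ}
    (hB : ∀ x, ‖S (B x)‖ ≤ c * ‖S x‖) {x₀ : H} (hx₀ : aNorm A x₀ = 1) :
    0 ≤ opANorm A B :=
  le_trans (norm_nonneg _) (le_opANorm hS2 hSsa hB hx₀ hx₀)

lemma aNorm_apply_le_opANorm (hS2 : S * S = A) (hSsa : IsSelfAdjoint S) {B : H →L[ℂ] H} {c : ℝ}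
    (hB : ∀ x, ‖S (B x)‖ ≤ c * ‖S x‖) {x₀ : H} (hx₀ : aNorm A x₀ = 1)
    {x : H} (hx : aNorm A x = 1) : ‖S (B x)‖ ≤ opANorm A B := by
  rcases eq_or_lt_of_le (norm_nonneg (S (B x))) with h0 | hpos
  · rw [← h0]; exact opANorm_nonneg hS2 hSsa hB hx₀
  · set y := ((‖S (B x)‖⁻¹ : ℝ) : ℂ) • (B x) with hy
    have hyn : aNorm A y = 1 := by
      rw [aNorm_eq hS2 hSsa, hy, map_smul, norm_smul]
      have : ‖((‖S (B x)‖⁻¹ : ℝ) : ℂ)‖ = ‖S (B x)‖⁻¹ := by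
        rw [Complex.norm_real, Real.norm_eq_abs, abs_of_nonneg (by positivity)]
      rw [this, inv_mul_cancel₀ (ne_of_gt hpos)]
    have hval : ‖aInner A (B x) y‖ = ‖S (B x)‖ := by
      rw [aInner_eq hS2 hSsa, hy, map_smul, inner_smul_right]
      rw [@inner_self_eq_norm_sq_to_K ℂ H _ _ _ (S (B x))]
      simp only [norm_mul, norm_pow, Complex.norm_real, RCLike.norm_ofReal, Real.norm_eq_abs,
        abs_of_nonneg (inv_nonneg.mpr hpos.le), abs_of_nonneg hpos.le]
      rw [sq, ← mul_assoc, inv_mul_cancel₀ hpos.ne', one_mul]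
    calc ‖S (B x)‖ = ‖aInner A (B x) y‖ := hval.symm
      _ ≤ opANorm A B := le_opANorm hS2 hSsa hB hx hyn

lemma wA_bddAbove (hS2 : S * S = A) (hSsa : IsSelfAdjoint S) {B : H →L[ℂ] H} {c : ℝ}
    (hB : ∀ x, ‖S (B x)‖ ≤ c * ‖S x‖) :
    BddAbove {r : ℝ | ∃ x, aNorm A x = 1 ∧ r = ‖aInner A (B x) x‖} := by
  refine ⟨c, fun r hr => ?_⟩
  obtain ⟨x, hx, rfl⟩ := hr
  rw [aNorm_eq hS2 hSsa] at hx
  calc ‖aInner A (B x) x‖ ≤ ‖S (B x)‖ * ‖S x‖ := abs_aInner_le_mul hS2 hSsa _ _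
    _ ≤ (c * ‖S x‖) * ‖S x‖ := mul_le_mul_of_nonneg_right (hB x) (norm_nonneg _)
    _ = c := by rw [hx]; ring

lemma le_wA (hS2 : S * S = A) (hSsa : IsSelfAdjoint S) {B : H →L[ℂ] H} {c : ℝ}
    (hB : ∀ x, ‖S (B x)‖ ≤ c * ‖S x‖) {x : H} (hx : aNorm A x = 1) :
    ‖aInner A (B x) x‖ ≤ wA A B :=
  le_csSup (wA_bddAbove hS2 hSsa hB) ⟨x, hx, rfl⟩

lemma wA_le {B : H →L[ℂ] H} {m : ℝ} {x₀ : H} (hx₀ : aNorm A x₀ = 1)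
    (h : ∀ x, aNorm A x = 1 → ‖aInner A (B x) x‖ ≤ m) : wA A B ≤ m := by
  have hne : {r : ℝ | ∃ x, aNorm A x = 1 ∧
      r = ‖aInner A (B x) x‖}.Nonempty := ⟨_, x₀, hx₀, rfl⟩
  refine csSup_le hne ?_
  rintro r ⟨x, hx, rfl⟩
  exact h x hx

end Machinery

lemma real_cs {p q r s : ℝ} (hp : 0 ≤ p) (hq : 0 ≤ q) (hr : 0 ≤ r) (hs : 0 ≤ s) :
    p * q + r * s ≤ Real.sqrt ((p ^ 2 + r ^ 2) * (q ^ 2 + s ^ 2)) := by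
  have h1 : (p * q + r * s) ^ 2 ≤ (p ^ 2 + r ^ 2) * (q ^ 2 + s ^ 2) := by
    nlinarith [sq_nonneg (p * s - r * q)]
  have h2 : 0 ≤ p * q + r * s := by positivity
  nlinarith [Real.sq_sqrt (show (0:ℝ) ≤ (p ^ 2 + r ^ 2) * (q ^ 2 + s ^ 2) by positivity),
    Real.sqrt_nonneg ((p ^ 2 + r ^ 2) * (q ^ 2 + s ^ 2)),
    sq_nonneg (p * q + r * s - Real.sqrt ((p ^ 2 + r ^ 2) * (q ^ 2 + s ^ 2)))]

lemma aux_ineq (a b c : H) :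
    ‖(inner ℂ a c : ℂ)‖ ^ 2 + ‖(inner ℂ b c : ℂ)‖ ^ 2 ≤
      ‖c‖ ^ 2 * (max (‖a‖ ^ 2) (‖b‖ ^ 2) + ‖(inner ℂ a b : ℂ)‖) := by
  set lam : ℂ := inner ℂ a c with hlam
  set mu : ℂ := inner ℂ b c with hmu
  set L : ℝ := ‖lam‖ ^ 2 + ‖mu‖ ^ 2 with hLdef
  set v : H := lam • a + mu • b with hv
  have hLnn : 0 ≤ L := by positivity
  have hvc : (inner ℂ v c : ℂ) = (L : ℝ) := by
    rw [hv, inner_add_left, inner_smul_left, inner_smul_left, ← hlam, ← hmu]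
    rw [mul_comm (starRingEnd ℂ lam) lam, mul_comm (starRingEnd ℂ mu) mu]
    rw [Complex.mul_conj, Complex.mul_conj]
    rw [hLdef]
    push_cast [Complex.normSq_eq_norm_sq]
    ring
  have hL1 : L ≤ ‖v‖ * ‖c‖ := by
    calc L = ‖(inner ℂ v c : ℂ)‖ := by
          rw [hvc, Complex.norm_real, Real.norm_eq_abs, abs_of_nonneg hLnn]
      _ ≤ ‖v‖ * ‖c‖ := norm_inner_le_norm _ _
  set M : ℝ := max (‖a‖ ^ 2) (‖b‖ ^ 2) with hM
  set X : ℝ := ‖(inner ℂ a b : ℂ)‖ with hX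
  have hMnn : (0:ℝ) ≤ M := le_max_of_le_left (by positivity)
  have hXnn : (0:ℝ) ≤ X := norm_nonneg _
  have hvsq : ‖v‖ ^ 2 ≤ L * (M + X) := by
    have hexp : ‖v‖ ^ 2 = ‖lam • a‖ ^ 2 + 2 * Complex.re (inner ℂ (lam • a) (mu • b) : ℂ)
        + ‖mu • b‖ ^ 2 := by
      have h := @norm_add_sq ℂ H _ _ _ (lam • a) (mu • b)
      exact h
    have h1 : ‖lam • a‖ ^ 2 ≤ ‖lam‖ ^ 2 * M := by
      rw [norm_smul, mul_pow]
      exact mul_le_mul_of_nonneg_left (le_max_left _ _) (by positivity)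
    have h2 : ‖mu • b‖ ^ 2 ≤ ‖mu‖ ^ 2 * M := by
      rw [norm_smul, mul_pow]
      exact mul_le_mul_of_nonneg_left (le_max_right _ _) (by positivity)
    have h3 : Complex.re (inner ℂ (lam • a) (mu • b) : ℂ) ≤ ‖lam‖ * ‖mu‖ * X := by
      rw [inner_smul_left, inner_smul_right]
      calc Complex.re (starRingEnd ℂ lam * (mu * inner ℂ a b))
          ≤ ‖starRingEnd ℂ lam * (mu * (inner ℂ a b : ℂ))‖ := Complex.re_le_norm _
        _ = ‖lam‖ * ‖mu‖ * X := by
            rw [norm_mul, norm_mul, RCLike.norm_conj, hX]; ring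
    have h4 : 2 * (‖lam‖ * ‖mu‖) ≤ ‖lam‖ ^ 2 + ‖mu‖ ^ 2 := by
      nlinarith [sq_nonneg (‖lam‖ - ‖mu‖)]
    calc ‖v‖ ^ 2 = ‖lam • a‖ ^ 2 + 2 * Complex.re (inner ℂ (lam • a) (mu • b) : ℂ)
        + ‖mu • b‖ ^ 2 := hexp
      _ ≤ ‖lam‖ ^ 2 * M + 2 * (‖lam‖ * ‖mu‖ * X) + ‖mu‖ ^ 2 * M := by
          have := mul_le_mul_of_nonneg_left h3 (by norm_num : (0:ℝ) ≤ 2)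
          linarith
      _ ≤ ‖lam‖ ^ 2 * M + (‖lam‖ ^ 2 + ‖mu‖ ^ 2) * X + ‖mu‖ ^ 2 * M := by
          have := mul_le_mul_of_nonneg_right h4 hXnn
          nlinarith
      _ = L * (M + X) := by rw [hLdef]; ring
  -- conclude : L ≤ ‖c‖^2 * (M + X)
  have hfinal : L ≤ ‖c‖ ^ 2 * (M + X) := by
    rcases eq_or_lt_of_le hLnn with h0 | hpos
    · rw [← h0]; positivity
    · have hsq : L ^ 2 ≤ ‖v‖ ^ 2 * ‖c‖ ^ 2 := by nlinarith [norm_nonneg v, norm_nonneg c]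
      have : L ^ 2 ≤ L * (M + X) * ‖c‖ ^ 2 := by nlinarith [sq_nonneg (‖c‖)]
      have h5 : L * L ≤ L * ((M + X) * ‖c‖ ^ 2) := by nlinarith
      have := le_of_mul_le_mul_left h5 hpos
      linarith [this]
  calc ‖(inner ℂ a c : ℂ)‖ ^ 2 + ‖(inner ℂ b c : ℂ)‖ ^ 2 = L := by rw [hLdef, hlam, hmu]
    _ ≤ ‖c‖ ^ 2 * (M + X) := hfinal
    _ = ‖c‖ ^ 2 * (max (‖a‖ ^ 2) (‖b‖ ^ 2) + ‖(inner ℂ a b : ℂ)‖) := by rw [hM, hX]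



theorem stmt18 (A : H →L[ℂ] H) (hA : A ≠ 0) (hApos : A.IsPositive)
    (T Ts : H →L[ℂ] H) (hTs : IsSharp A T Ts) :
    OmegaA A T Ts =
        sSup {r : ℝ | ∃ x y, aNorm A x = 1 ∧ aNorm A y = 1 ∧
          r = Real.sqrt (‖aInner A (T x) y‖ ^ 2 +
            ‖aInner A (Ts x) y‖ ^ 2)} ∧
      opANorm A T ≤ OmegaA A T Ts ∧
      OmegaA A T Ts ≤
        min (Real.sqrt (opANorm A (T ∘L Ts + Ts ∘L T)))
          (Real.sqrt ((opANorm A T) ^ 2 + wA A (T ^ 2))) ∧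
      min (Real.sqrt (opANorm A (T ∘L Ts + Ts ∘L T)))
          (Real.sqrt ((opANorm A T) ^ 2 + wA A (T ^ 2))) ≤
        Real.sqrt 2 * opANorm A T ∧
      (IsSelfAdjoint (A ∘L T) → OmegaA A T Ts = Real.sqrt 2 * opANorm A T) := by
  obtain ⟨hT, -⟩ := hTs
  have hAsa : IsSelfAdjoint A := hApos.isSelfAdjoint
  set S : H →L[ℂ] H := CFC.sqrt A with hSdef
  have hS2 : S * S = A := CFC.sqrt_mul_sqrt_self A ((nonneg_iff_isPositive A).mpr hApos)
  have hSsa : IsSelfAdjoint S := IsSelfAdjoint.of_nonneg (CFC.sqrt_nonneg A)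
  obtain ⟨x₀, hx₀S⟩ := exists_unit hS2 hSsa hA
  have hx₀ : aNorm A x₀ = 1 := by rw [aNorm_eq hS2 hSsa]; exact hx₀S
  set cT : ℝ := Real.sqrt ‖Ts * T‖ with hcTdef
  set cS : ℝ := Real.sqrt ‖T * Ts‖ with hcSdef
  have hcT : 0 ≤ cT := Real.sqrt_nonneg _
  have hcS : 0 ≤ cS := Real.sqrt_nonneg _
  have hTb : ∀ x, ‖S (T x)‖ ≤ cT * ‖S x‖ := T_abound hS2 hSsa hAsa hT
  have hTsb : ∀ x, ‖S (Ts x)‖ ≤ cS * ‖S x‖ := Ts_abound hS2 hSsa hAsa hT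
  set N : ℝ := opANorm A T with hNdef
  have hNnn : 0 ≤ N := opANorm_nonneg hS2 hSsa hTb hx₀
  -- |aInner (T x) y| ≤ ‖S (Ts y)‖ etc for unit vectors
  have habsT : ∀ x y : H, aNorm A x = 1 → aNorm A y = 1 →
      ‖aInner A (T x) y‖ ≤ cT := by
    intro x y hx hy
    rw [aNorm_eq hS2 hSsa] at hx hy
    calc ‖aInner A (T x) y‖ ≤ ‖S (T x)‖ * ‖S y‖ := abs_aInner_le_mul hS2 hSsa _ _
      _ ≤ (cT * ‖S x‖) * ‖S y‖ := mul_le_mul_of_nonneg_right (hTb x) (norm_nonneg _)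
      _ = cT := by rw [hx, hy]; ring
  have habsTs : ∀ x y : H, aNorm A x = 1 → aNorm A y = 1 →
      ‖aInner A (Ts x) y‖ ≤ cS := by
    intro x y hx hy
    rw [aNorm_eq hS2 hSsa] at hx hy
    calc ‖aInner A (Ts x) y‖ ≤ ‖S (Ts x)‖ * ‖S y‖ := abs_aInner_le_mul hS2 hSsa _ _
      _ ≤ (cS * ‖S x‖) * ‖S y‖ := mul_le_mul_of_nonneg_right (hTsb x) (norm_nonneg _)
      _ = cS := by rw [hx, hy]; ring
  -- combination formula
  have hcomb : ∀ (α β : ℂ) (x y : H), aInner A ((α • T + β • Ts) x) y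
      = (starRingEnd ℂ α) * aInner A (T x) y + (starRingEnd ℂ β) * aInner A (Ts x) y := by
    intro α β x y
    simp [aInner, ContinuousLinearMap.add_apply, ContinuousLinearMap.smul_apply, map_add,
      map_smul, inner_add_left, inner_smul_left]
    ring
  -- bound for combinations
  have hcombB : ∀ (α β : ℂ), ‖α‖ ≤ 1 → ‖β‖ ≤ 1 →
      ∀ x, ‖S ((α • T + β • Ts) x)‖ ≤ (cT + cS) * ‖S x‖ := by
    intro α β hα hβ x
    have h1 : (α • T + β • Ts) x = α • T x + β • Ts x := by
      simp [ContinuousLinearMap.add_apply, ContinuousLinearMap.smul_apply]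
    rw [h1, map_add, map_smul, map_smul]
    calc ‖α • S (T x) + β • S (Ts x)‖ ≤ ‖α • S (T x)‖ + ‖β • S (Ts x)‖ := norm_add_le _ _
      _ = ‖α‖ * ‖S (T x)‖ + ‖β‖ * ‖S (Ts x)‖ := by rw [norm_smul, norm_smul]
      _ ≤ 1 * (cT * ‖S x‖) + 1 * (cS * ‖S x‖) := by
          apply add_le_add
          · exact mul_le_mul hα (hTb x) (norm_nonneg _) (by norm_num)
          · exact mul_le_mul hβ (hTsb x) (norm_nonneg _) (by norm_num)
      _ = (cT + cS) * ‖S x‖ := by ring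
  -- Omega set
  have hΩdef : OmegaA A T Ts =
      sSup {r : ℝ | ∃ α β : ℂ, ‖α‖ ^ 2 + ‖β‖ ^ 2 ≤ 1 ∧ r = opANorm A (α • T + β • Ts)} := rfl
  have hsq_le_one : ∀ t : ℝ, 0 ≤ t → t ^ 2 ≤ 1 → t ≤ 1 := by intro t h1 h2; nlinarith
  have hΩbdd : BddAbove
      {r : ℝ | ∃ α β : ℂ, ‖α‖ ^ 2 + ‖β‖ ^ 2 ≤ 1 ∧ r = opANorm A (α • T + β • Ts)} := by
    refine ⟨cT + cS, ?_⟩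
    rintro r ⟨α, β, hαβ, rfl⟩
    have hα1 : ‖α‖ ≤ 1 := hsq_le_one _ (norm_nonneg _) (by nlinarith [sq_nonneg ‖β‖])
    have hβ1 : ‖β‖ ≤ 1 := hsq_le_one _ (norm_nonneg _) (by nlinarith [sq_nonneg ‖α‖])
    apply opANorm_le hx₀
    intro x y hx hy
    rw [hcomb]
    calc ‖(starRingEnd ℂ α) * aInner A (T x) y
          + (starRingEnd ℂ β) * aInner A (Ts x) y‖
        ≤ ‖(starRingEnd ℂ α) * aInner A (T x) y‖
          + ‖(starRingEnd ℂ β) * aInner A (Ts x) y‖ := norm_add_le _ _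
      _ = ‖α‖ * ‖aInner A (T x) y‖ + ‖β‖ * ‖aInner A (Ts x) y‖ := by
          rw [norm_mul, norm_mul, Complex.norm_conj, Complex.norm_conj]
      _ ≤ 1 * cT + 1 * cS := by
          apply add_le_add
          · exact mul_le_mul hα1 (habsT x y hx hy) (norm_nonneg _) (by norm_num)
          · exact mul_le_mul hβ1 (habsTs x y hx hy) (norm_nonneg _) (by norm_num)
      _ = cT + cS := by ring
  have hΩmem : opANorm A T ∈
      {r : ℝ | ∃ α β : ℂ, ‖α‖ ^ 2 + ‖β‖ ^ 2 ≤ 1 ∧ r = opANorm A (α • T + β • Ts)} :=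
    ⟨1, 0, by norm_num, by rw [one_smul, zero_smul, add_zero]⟩
  have hΩne : Set.Nonempty
      {r : ℝ | ∃ α β : ℂ, ‖α‖ ^ 2 + ‖β‖ ^ 2 ≤ 1 ∧ r = opANorm A (α • T + β • Ts)} :=
    ⟨_, hΩmem⟩
  have hPart2 : opANorm A T ≤ OmegaA A T Ts := by
    rw [hΩdef]; exact le_csSup hΩbdd hΩmem
  -- D set
  have hDbdd : BddAbove {r : ℝ | ∃ x y, aNorm A x = 1 ∧ aNorm A y = 1 ∧
      r = Real.sqrt (‖aInner A (T x) y‖ ^ 2 +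
        ‖aInner A (Ts x) y‖ ^ 2)} := by
    refine ⟨Real.sqrt (cT ^ 2 + cS ^ 2), ?_⟩
    rintro r ⟨x, y, hx, hy, rfl⟩
    apply Real.sqrt_le_sqrt
    have h1 := habsT x y hx hy
    have h2 := habsTs x y hx hy
    have h3 := norm_nonneg (aInner A (T x) y)
    have h4 := norm_nonneg (aInner A (Ts x) y)
    nlinarith
  have hDne : Set.Nonempty {r : ℝ | ∃ x y, aNorm A x = 1 ∧ aNorm A y = 1 ∧
      r = Real.sqrt (‖aInner A (T x) y‖ ^ 2 +
        ‖aInner A (Ts x) y‖ ^ 2)} := ⟨_, x₀, x₀, hx₀, hx₀, rfl⟩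
  -- Part 1 : equality
  have hpart1 : OmegaA A T Ts = sSup {r : ℝ | ∃ x y, aNorm A x = 1 ∧ aNorm A y = 1 ∧
      r = Real.sqrt (‖aInner A (T x) y‖ ^ 2 +
        ‖aInner A (Ts x) y‖ ^ 2)} := by
    apply le_antisymm
    · rw [hΩdef]
      refine csSup_le hΩne ?_
      rintro r ⟨α, β, hαβ, rfl⟩
      apply opANorm_le hx₀
      intro x y hx hy
      set a : ℂ := aInner A (T x) y with ha
      set b : ℂ := aInner A (Ts x) y with hb
      have hstep1 : ‖aInner A ((α • T + β • Ts) x) y‖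
          ≤ ‖α‖ * ‖a‖ + ‖β‖ * ‖b‖ := by
        rw [hcomb]
        calc ‖(starRingEnd ℂ α) * a + (starRingEnd ℂ β) * b‖
            ≤ ‖(starRingEnd ℂ α) * a‖ + ‖(starRingEnd ℂ β) * b‖ :=
              norm_add_le _ _
          _ = ‖α‖ * ‖a‖ + ‖β‖ * ‖b‖ := by
              rw [norm_mul, norm_mul, Complex.norm_conj, Complex.norm_conj]
      have hstep2 : ‖α‖ * ‖a‖ + ‖β‖ * ‖b‖
          ≤ Real.sqrt ((‖α‖ ^ 2 + ‖β‖ ^ 2) * (‖a‖ ^ 2 + ‖b‖ ^ 2)) :=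
        real_cs (norm_nonneg _) (norm_nonneg _) (norm_nonneg _)
          (norm_nonneg _)
      have hstep3 : Real.sqrt ((‖α‖ ^ 2 + ‖β‖ ^ 2) * (‖a‖ ^ 2 + ‖b‖ ^ 2))
          ≤ Real.sqrt (‖a‖ ^ 2 + ‖b‖ ^ 2) := by
        apply Real.sqrt_le_sqrt
        apply mul_le_of_le_one_left (by positivity) hαβ
      have hstep4 : Real.sqrt (‖a‖ ^ 2 + ‖b‖ ^ 2)
          ≤ sSup {r : ℝ | ∃ x y, aNorm A x = 1 ∧ aNorm A y = 1 ∧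
            r = Real.sqrt (‖aInner A (T x) y‖ ^ 2 +
              ‖aInner A (Ts x) y‖ ^ 2)} :=
        le_csSup hDbdd ⟨x, y, hx, hy, rfl⟩
      linarith
    · refine csSup_le hDne ?_
      rintro r ⟨x, y, hx, hy, rfl⟩
      set a : ℂ := aInner A (T x) y with ha
      set b : ℂ := aInner A (Ts x) y with hb
      set m : ℝ := Real.sqrt (‖a‖ ^ 2 + ‖b‖ ^ 2) with hm
      rcases eq_or_lt_of_le (Real.sqrt_nonneg (‖a‖ ^ 2 + ‖b‖ ^ 2)) with
        h0 | hpos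
      · have hm0 : m = 0 := by rw [hm, ← h0]
        rw [hm0]; exact le_trans hNnn hPart2
      · have hmsq : m ^ 2 = ‖a‖ ^ 2 + ‖b‖ ^ 2 := by
          rw [hm]; exact Real.sq_sqrt (by positivity)
        set α : ℂ := a / (m : ℝ) with hα
        set β : ℂ := b / (m : ℝ) with hβ
        have hnormm : ‖((m : ℝ) : ℂ)‖ = m := by
          rw [Complex.norm_real, Real.norm_eq_abs, abs_of_pos hpos]
        have hαβ : ‖α‖ ^ 2 + ‖β‖ ^ 2 ≤ 1 := by
          rw [hα, hβ, norm_div, norm_div, hnormm]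
          rw [div_pow, div_pow]
          rw [← add_div, ← hmsq]
          rw [div_self (by positivity)]
        have hval : ‖aInner A ((α • T + β • Ts) x) y‖ = m := by
          rw [hcomb, ← ha, ← hb, hα, hβ]
          have hconj : (starRingEnd ℂ) (a / (m:ℝ)) * a + (starRingEnd ℂ) (b / (m:ℝ)) * b
              = (((‖a‖ ^ 2 + ‖b‖ ^ 2 : ℝ)) : ℂ) / (m : ℝ) := by
            rw [map_div₀, map_div₀, Complex.conj_ofReal]
            rw [div_mul_eq_mul_div, div_mul_eq_mul_div, ← add_div]
            congr 1
            rw [mul_comm ((starRingEnd ℂ) a) a, mul_comm ((starRingEnd ℂ) b) b]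
            rw [Complex.mul_conj, Complex.mul_conj]
            push_cast [Complex.normSq_eq_norm_sq]
            ring
          rw [hconj, norm_div, Complex.norm_real, Complex.norm_real, Real.norm_eq_abs, Real.norm_eq_abs]
          rw [abs_of_nonneg (by positivity), abs_of_pos hpos, ← hmsq]
          rw [sq]
          field_simp
          rw [Real.sqrt_sq (show (0:ℝ) ≤ m from hpos.le), sq, mul_self_div_self]
        have hα1 : ‖α‖ ≤ 1 := hsq_le_one _ (norm_nonneg _) (by nlinarith [sq_nonneg ‖β‖])
        have hβ1 : ‖β‖ ≤ 1 := hsq_le_one _ (norm_nonneg _) (by nlinarith [sq_nonneg ‖α‖])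
        have hle : m ≤ opANorm A (α • T + β • Ts) := by
          rw [← hval]
          exact le_opANorm hS2 hSsa (hcombB α β hα1 hβ1) hx hy
        rw [hΩdef]
        exact le_trans hle (le_csSup hΩbdd ⟨α, β, hαβ, rfl⟩)
  -- shared facts for parts 3-5
  have hpair1 : ∀ x y : H, aNorm A x = 1 → aNorm A y = 1 →
      ‖aInner A (T x) y‖ ^ 2 + ‖aInner A (Ts x) y‖ ^ 2
        ≤ opANorm A (T ∘L Ts + Ts ∘L T) := by
    intro x y hx hy
    have hxS : ‖S x‖ = 1 := by rw [← aNorm_eq hS2 hSsa]; exact hx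
    have h1 : ‖aInner A (T x) y‖ ≤ ‖S (Ts y)‖ := by
      rw [swap1 hS2 hSsa hAsa hT]
      calc ‖aInner A x (Ts y)‖ ≤ ‖S x‖ * ‖S (Ts y)‖ := abs_aInner_le_mul hS2 hSsa _ _
        _ = ‖S (Ts y)‖ := by rw [hxS, one_mul]
    have h2 : ‖aInner A (Ts x) y‖ ≤ ‖S (T y)‖ := by
      rw [swap2 hS2 hSsa hAsa hT]
      calc ‖aInner A x (T y)‖ ≤ ‖S x‖ * ‖S (T y)‖ := abs_aInner_le_mul hS2 hSsa _ _
        _ = ‖S (T y)‖ := by rw [hxS, one_mul]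
    have hplus : aInner A ((T ∘L Ts + Ts ∘L T) y) y
        = (inner ℂ (S (Ts y)) (S (Ts y)) : ℂ) + inner ℂ (S (T y)) (S (T y)) := by
      have e0 : aInner A ((T ∘L Ts + Ts ∘L T) y) y
          = aInner A (T (Ts y)) y + aInner A (Ts (T y)) y := by
        have e1 : (T ∘L Ts + Ts ∘L T) y = T (Ts y) + Ts (T y) := rfl
        simp only [aInner, e1, map_add, inner_add_left]
      rw [e0, swap1 hS2 hSsa hAsa hT (Ts y) y, swap2 hS2 hSsa hAsa hT (T y) y,
        aInner_eq hS2 hSsa, aInner_eq hS2 hSsa]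
    have hre : ‖S (Ts y)‖ ^ 2 + ‖S (T y)‖ ^ 2 = (aInner A ((T ∘L Ts + Ts ∘L T) y) y).re := by
      rw [hplus, Complex.add_re]
      have e1 : (inner ℂ (S (Ts y)) (S (Ts y)) : ℂ).re = ‖S (Ts y)‖ ^ 2 := by
        have := @inner_self_eq_norm_sq ℂ H _ _ _ (S (Ts y)); simpa using this
      have e2 : (inner ℂ (S (T y)) (S (T y)) : ℂ).re = ‖S (T y)‖ ^ 2 := by
        have := @inner_self_eq_norm_sq ℂ H _ _ _ (S (T y)); simpa using this
      rw [e1, e2]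
    have hRb : ∀ z, ‖S ((T ∘L Ts + Ts ∘L T) z)‖ ≤ (cT * cS + cS * cT) * ‖S z‖ := by
      intro z
      have e1 : (T ∘L Ts + Ts ∘L T) z = T (Ts z) + Ts (T z) := rfl
      rw [e1, map_add]
      calc ‖S (T (Ts z)) + S (Ts (T z))‖ ≤ ‖S (T (Ts z))‖ + ‖S (Ts (T z))‖ := norm_add_le _ _
        _ ≤ cT * ‖S (Ts z)‖ + cS * ‖S (T z)‖ := add_le_add (hTb _) (hTsb _)
        _ ≤ cT * (cS * ‖S z‖) + cS * (cT * ‖S z‖) :=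
            add_le_add (mul_le_mul_of_nonneg_left (hTsb z) hcT)
              (mul_le_mul_of_nonneg_left (hTb z) hcS)
        _ = (cT * cS + cS * cT) * ‖S z‖ := by ring
    have hfin : (aInner A ((T ∘L Ts + Ts ∘L T) y) y).re ≤ opANorm A (T ∘L Ts + Ts ∘L T) := by
      calc (aInner A ((T ∘L Ts + Ts ∘L T) y) y).re
          ≤ ‖aInner A ((T ∘L Ts + Ts ∘L T) y) y‖ := Complex.re_le_norm _
        _ ≤ opANorm A (T ∘L Ts + Ts ∘L T) := le_opANorm hS2 hSsa hRb hy hy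
    have h1s := pow_le_pow_left₀ (norm_nonneg _) h1 2
    have h2s := pow_le_pow_left₀ (norm_nonneg _) h2 2
    linarith
  have hSTx_le : ∀ x, aNorm A x = 1 → ‖S (T x)‖ ≤ N := fun x hx =>
    aNorm_apply_le_opANorm hS2 hSsa hTb hx₀ hx
  have hTsOp : opANorm A Ts ≤ N := by
    apply opANorm_le hx₀
    intro u v hu hv
    rw [swap2 hS2 hSsa hAsa hT, aInner_conj hS2 hSsa, Complex.norm_conj]
    exact le_opANorm hS2 hSsa hTb hv hu
  have hSTsx_le : ∀ x, aNorm A x = 1 → ‖S (Ts x)‖ ≤ N := fun x hx =>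
    le_trans (aNorm_apply_le_opANorm hS2 hSsa hTsb hx₀ hx) hTsOp
  have hT2b : ∀ z, ‖S ((T ^ 2) z)‖ ≤ (cT * cT) * ‖S z‖ := by
    intro z
    have e1 : (T ^ 2) z = T (T z) := by rw [sq]; rfl
    rw [e1]
    calc ‖S (T (T z))‖ ≤ cT * ‖S (T z)‖ := hTb _
      _ ≤ cT * (cT * ‖S z‖) := mul_le_mul_of_nonneg_left (hTb z) hcT
      _ = (cT * cT) * ‖S z‖ := by ring
  have hcross : ∀ x, ‖aInner A (T x) (Ts x)‖
      = ‖aInner A ((T ^ 2) x) x‖ := by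
    intro x
    have e1 : aInner A (T x) (Ts x) = starRingEnd ℂ (aInner A (Ts x) (T x)) :=
      aInner_conj hS2 hSsa _ _
    have e2 : aInner A (Ts x) (T x) = aInner A x (T (T x)) := swap2 hS2 hSsa hAsa hT x (T x)
    have e3 : aInner A x (T (T x)) = starRingEnd ℂ (aInner A (T (T x)) x) :=
      aInner_conj hS2 hSsa _ _
    have e4 : T (T x) = (T ^ 2) x := by rw [sq]; rfl
    rw [e1, e2, e3, e4, Complex.norm_conj, Complex.norm_conj]
  have hpair2 : ∀ x y : H, aNorm A x = 1 → aNorm A y = 1 →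
      ‖aInner A (T x) y‖ ^ 2 + ‖aInner A (Ts x) y‖ ^ 2
        ≤ N ^ 2 + wA A (T ^ 2) := by
    intro x y hx hy
    have hyS : ‖S y‖ = 1 := by rw [← aNorm_eq hS2 hSsa]; exact hy
    have haux := aux_ineq (S (T x)) (S (Ts x)) (S y)
    have ea : ‖aInner A (T x) y‖ = ‖(inner ℂ (S (T x)) (S y) : ℂ)‖ := by
      rw [← aInner_eq hS2 hSsa]
    have eb : ‖aInner A (Ts x) y‖ = ‖(inner ℂ (S (Ts x)) (S y) : ℂ)‖ := by
      rw [← aInner_eq hS2 hSsa]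
    have hmax : max (‖S (T x)‖ ^ 2) (‖S (Ts x)‖ ^ 2) ≤ N ^ 2 :=
      max_le (pow_le_pow_left₀ (norm_nonneg _) (hSTx_le x hx) 2)
        (pow_le_pow_left₀ (norm_nonneg _) (hSTsx_le x hx) 2)
    have hXw : ‖(inner ℂ (S (T x)) (S (Ts x)) : ℂ)‖ ≤ wA A (T ^ 2) := by
      rw [← aInner_eq hS2 hSsa, hcross x]
      exact le_wA hS2 hSsa hT2b hx
    rw [ea, eb, hyS] at *
    rw [hyS] at haux
    calc ‖(inner ℂ (S (T x)) (S y) : ℂ)‖ ^ 2 + ‖(inner ℂ (S (Ts x)) (S y) : ℂ)‖ ^ 2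
        ≤ (1:ℝ) ^ 2 * (max (‖S (T x)‖ ^ 2) (‖S (Ts x)‖ ^ 2)
          + ‖(inner ℂ (S (T x)) (S (Ts x)) : ℂ)‖) := haux
      _ ≤ N ^ 2 + wA A (T ^ 2) := by
          rw [one_pow, one_mul]
          exact add_le_add hmax hXw
  refine ⟨hpart1, hPart2, ?_, ?_, ?_⟩
  · -- part 3
    rw [hpart1]
    refine csSup_le hDne ?_
    rintro r ⟨x, y, hx, hy, rfl⟩
    apply le_min
    · exact Real.sqrt_le_sqrt (hpair1 x y hx hy)
    · exact Real.sqrt_le_sqrt (hpair2 x y hx hy)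
  · -- part 4
    have hw2 : wA A (T ^ 2) ≤ N ^ 2 := by
      apply wA_le hx₀
      intro x hx
      rw [← hcross x]
      calc ‖aInner A (T x) (Ts x)‖ ≤ ‖S (T x)‖ * ‖S (Ts x)‖ :=
            abs_aInner_le_mul hS2 hSsa _ _
        _ ≤ N * N := mul_le_mul (hSTx_le x hx) (hSTsx_le x hx) (norm_nonneg _) hNnn
        _ = N ^ 2 := (sq N).symm
    calc min (Real.sqrt (opANorm A (T ∘L Ts + Ts ∘L T)))
          (Real.sqrt ((opANorm A T) ^ 2 + wA A (T ^ 2)))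
        ≤ Real.sqrt (N ^ 2 + wA A (T ^ 2)) := min_le_right _ _
      _ ≤ Real.sqrt (N ^ 2 + N ^ 2) := Real.sqrt_le_sqrt (by linarith)
      _ = Real.sqrt 2 * N := by
          rw [show N ^ 2 + N ^ 2 = 2 * N ^ 2 by ring, Real.sqrt_mul (by norm_num),
            Real.sqrt_sq hNnn]
  · -- part 5
    intro hsa
    have hATT : A * Ts = A * T := by
      calc A * Ts = star T * A := sharp_mul hT
        _ = star T * star A := by rw [hAsa.star_eq]
        _ = star (A * T) := (star_mul A T).symm
        _ = A * T := hsa.star_eq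
    have hEq : ∀ x y : H, aInner A (Ts x) y = aInner A (T x) y := by
      intro x y
      unfold aInner
      have e : A (Ts x) = A (T x) := by
        have e1 : A (Ts x) = (A * Ts) x := rfl
        have e2 : A (T x) = (A * T) x := rfl
        rw [e1, e2, hATT]
      rw [e]
    have hsqrt2 : ∀ t : ℝ, 0 ≤ t → Real.sqrt (t ^ 2 + t ^ 2) = Real.sqrt 2 * t := by
      intro t ht
      rw [show t ^ 2 + t ^ 2 = 2 * t ^ 2 by ring, Real.sqrt_mul (by norm_num),
        Real.sqrt_sq ht]
    rw [hpart1]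
    apply le_antisymm
    · refine csSup_le hDne ?_
      rintro r ⟨x, y, hx, hy, rfl⟩
      rw [hEq x y, hsqrt2 _ (norm_nonneg _)]
      exact mul_le_mul_of_nonneg_left (le_opANorm hS2 hSsa hTb hx hy) (Real.sqrt_nonneg 2)
    · have hNle : opANorm A T ≤ (sSup {r : ℝ | ∃ x y, aNorm A x = 1 ∧ aNorm A y = 1 ∧
          r = Real.sqrt (‖aInner A (T x) y‖ ^ 2 +
            ‖aInner A (Ts x) y‖ ^ 2)}) / Real.sqrt 2 := by
        apply opANorm_le hx₀
        intro x y hx hy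
        rw [le_div_iff₀ (by positivity : (0:ℝ) < Real.sqrt 2)]
        calc ‖aInner A (T x) y‖ * Real.sqrt 2
            = Real.sqrt 2 * ‖aInner A (T x) y‖ := by ring
          _ = Real.sqrt (‖aInner A (T x) y‖ ^ 2 +
              ‖aInner A (Ts x) y‖ ^ 2) := by
              rw [hEq x y, hsqrt2 _ (norm_nonneg _)]
          _ ≤ sSup {r : ℝ | ∃ x y, aNorm A x = 1 ∧ aNorm A y = 1 ∧
              r = Real.sqrt (‖aInner A (T x) y‖ ^ 2 +
                ‖aInner A (Ts x) y‖ ^ 2)} := le_csSup hDbdd ⟨x, y, hx, hy, rfl⟩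
      calc Real.sqrt 2 * opANorm A T
          ≤ Real.sqrt 2 * ((sSup {r : ℝ | ∃ x y, aNorm A x = 1 ∧ aNorm A y = 1 ∧
            r = Real.sqrt (‖aInner A (T x) y‖ ^ 2 +
              ‖aInner A (Ts x) y‖ ^ 2)}) / Real.sqrt 2) :=
            mul_le_mul_of_nonneg_left hNle (Real.sqrt_nonneg 2)
        _ = sSup {r : ℝ | ∃ x y, aNorm A x = 1 ∧ aNorm A y = 1 ∧
            r = Real.sqrt (‖aInner A (T x) y‖ ^ 2 +
              ‖aInner A (Ts x) y‖ ^ 2)} := by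
            field_simp
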